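/- Let a_1, …, a_n be non-negative reals, and assign weight a_i to each edge of Q^n joining vertices differing in the i-th coordinate. If H is a subgraph of Q^n induced by 2^(n-1) + 1 vertices, then some vertex of H has weighted degree (sum of weights of its incident edges in H) at least √(a_1² + ⋯ + a_n²). -/

import Mathlib

open scoped BigOperators

namespace HuangW

noncomputable section

local notation "√" => Real.sqrt

open Finset Fintype Function LinearMap Module Module.DualBases

/-- The hypercube in dimension `n`. -/
abbrev Q (n : ℕ) := Fin n → Bool

local instance (n) : Fintype (Q n) := inferInstanceAs (Fintype (Fin n → Bool))
local instance (n) : DecidableEq (Q n) := inferInstanceAs (DecidableEq (Fin n → Bool))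
local instance (n) : Inhabited (Q n) := inferInstanceAs (Inhabited (Fin n → Bool))

/-- The projection forgetting the first coordinate. -/
def π {n : ℕ} : Q n.succ → Q n := fun p => p ∘ Fin.succ

namespace Q

@[ext] theorem ext {n} {f g : Q n} (h : ∀ x, f x = g x) : f = g := funext h

variable (n : ℕ)

instance : Unique (Q 0) := ⟨⟨fun _ => true⟩, by intro; ext x; fin_cases x⟩

theorem card : card (Q n) = 2 ^ n := by simp [Q]

variable {n}

theorem succ_n_eq (p q : Q n.succ) : p = q ↔ p 0 = q 0 ∧ π p = π q := by
  constructor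
  · rintro rfl; exact ⟨rfl, rfl⟩
  · rintro ⟨h₀, h⟩
    ext x
    by_cases hx : x = 0
    · rwa [hx]
    · rw [← Fin.succ_pred x hx]
      exact congr_fun h (Fin.pred x hx)

end Q

/-- The free vector space on vertices of a hypercube, defined inductively. -/
@[reducible] def V : ℕ → Type
  | 0 => ℝ
  | Nat.succ n => V n × V n

namespace V

@[ext]
theorem ext {n : ℕ} {p q : V n.succ} (h₁ : p.1 = q.1) (h₂ : p.2 = q.2) : p = q := Prod.ext h₁ h₂

variable (n : ℕ)

instance : DecidableEq (V n) := by induction n <;> · dsimp only [V]; infer_instance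
instance : AddCommGroup (V n) := by induction n <;> · dsimp only [V]; infer_instance
instance : Module ℝ (V n) := by induction n <;> · dsimp only [V]; infer_instance

end V

noncomputable def e : ∀ {n}, Q n → V n
  | 0 => fun _ => (1 : ℝ)
  | Nat.succ _ => fun x => cond (x 0) (e (π x), 0) (0, e (π x))

@[simp]
theorem e_zero_apply (x : Q 0) : e x = (1 : ℝ) := rfl

noncomputable def ε : ∀ {n : ℕ}, Q n → V n →ₗ[ℝ] ℝ
  | 0, _ => LinearMap.id
  | Nat.succ _, p =>
    cond (p 0) ((ε <| π p).comp <| LinearMap.fst _ _ _) ((ε <| π p).comp <| LinearMap.snd _ _ _)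

variable {n : ℕ}

open Classical in
theorem duality (p q : Q n) : ε p (e q) = if p = q then 1 else 0 := by
  induction' n with n IH
  · rw [show p = q from Subsingleton.elim (α := Q 0) p q]
    simp [ε, e]
  · have hne : p 0 ≠ q 0 → p ≠ q := fun h hpq => h (by rw [hpq])
    dsimp [ε, e]
    cases hp : p 0 <;> cases hq : q 0
    all_goals
      repeat rw [Bool.cond_true]
      repeat rw [Bool.cond_false]
      simp only [LinearMap.fst_apply, LinearMap.snd_apply, LinearMap.comp_apply, map_zero,
        IH, V]
    · congr 1; rw [Q.succ_n_eq]; simp [hp, hq]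
    · rw [if_neg (hne (by rw [hp, hq]; simp))]
    · rw [if_neg (hne (by rw [hp, hq]; simp))]
    · congr 1; rw [Q.succ_n_eq]; simp [hp, hq]

theorem epsilon_total {v : V n} (h : ∀ p : Q n, (ε p) v = 0) : v = 0 := by
  induction' n with n ih
  · dsimp [ε] at h; exact h fun _ => true
  · cases' v with v₁ v₂
    ext <;> change _ = (0 : V n) <;> simp only <;> apply ih <;> intro p <;>
      [let q : Q n.succ := fun i => if h : i = 0 then true else p (i.pred h);
      let q : Q n.succ := fun i => if h : i = 0 then false else p (i.pred h)]
    all_goals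
      specialize h q
      first
      | rw [ε, show q 0 = true from rfl, Bool.cond_true] at h
      | rw [ε, show q 0 = false from rfl, Bool.cond_false] at h
      rwa [show p = π q by ext; simp [q, Fin.succ_ne_zero, π]]

open Classical in
theorem dualBases_e_ε (n : ℕ) : DualBases (@e n) (@ε n) where
  eval_same := by simp [duality]
  eval_of_ne _ _ h := by simp [duality, h]
  total {m₁ m₂} h := sub_eq_zero.mp (epsilon_total fun p => by rw [map_sub, h p, sub_self])

theorem dim_V : Module.rank ℝ (V n) = 2 ^ n := by
  have : Module.rank ℝ (V n) = (2 ^ n : ℕ) := by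
    classical
    rw [rank_eq_card_basis (dualBases_e_ε _).basis, Q.card]
  assumption_mod_cast

instance : FiniteDimensional ℝ (V n) :=
  Module.Finite.of_basis (dualBases_e_ε _).basis

theorem finrank_V : Module.finrank ℝ (V n) = 2 ^ n := by
  have := @dim_V n
  rw [← finrank_eq_rank] at this; assumption_mod_cast


/-! ### The weighted linear map -/

noncomputable def f : ∀ n, (Fin n → ℝ) → (V n →ₗ[ℝ] V n)
  | 0, _ => 0
  | Nat.succ n, a =>
    LinearMap.prod
      (LinearMap.coprod (f n (a ∘ Fin.succ)) (a 0 • LinearMap.id))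
      (LinearMap.coprod (a 0 • LinearMap.id) (-f n (a ∘ Fin.succ)))

theorem f_succ_apply (a : Fin (n + 1) → ℝ) (v : V n.succ) :
    f n.succ a v = (f n (a ∘ Fin.succ) v.1 + a 0 • v.2,
      a 0 • v.1 - f n (a ∘ Fin.succ) v.2) := by
  cases v
  rw [f]
  simp only [sub_eq_add_neg]
  rfl

theorem f_squared (a : Fin n → ℝ) (v : V n) :
    f n a (f n a v) = (∑ i, a i ^ 2) • v := by
  induction n with
  | zero => simp [f]
  | succ n IH =>
    cases v
    rw [f_succ_apply, f_succ_apply]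
    refine V.ext ?_ ?_ <;>
      simp only [V, Function.comp_apply, map_add, map_sub, map_neg, map_smul, IH,
        Fin.sum_univ_succ, add_smul, smul_add, smul_sub, smul_smul, pow_two, Prod.smul_mk,
        Prod.mk_add_mk, smul_neg, neg_neg] <;>
      abel

/-! ### Matrix entries -/

theorem pi_update_zero (q : Q n.succ) (b : Bool) :
    π (Function.update q 0 b) = π q := by
  ext i
  simp [π, Function.update, Fin.succ_ne_zero]

theorem pi_update_succ (q : Q n.succ) (i : Fin n) (b : Bool) :
    π (Function.update q i.succ b) = Function.update (π q) i b := by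
  ext j
  simp only [π, Function.comp_apply, Function.update]
  by_cases h : j = i
  · subst h; simp
  · simp [h, fun hh => h (Fin.succ_injective _ hh)]

theorem eq_update_zero_iff (p q : Q n.succ) (b : Bool) :
    p = Function.update q 0 b ↔ p 0 = b ∧ π p = π q := by
  rw [Q.succ_n_eq, pi_update_zero]
  simp

theorem update_succ_iff (p q : Q n.succ) (i : Fin n) (b : Bool) :
    p = Function.update q i.succ b ↔ p 0 = q 0 ∧ π p = Function.update (π q) i b := by
  rw [Q.succ_n_eq, pi_update_succ]
  simp [Function.update, (Fin.succ_ne_zero i).symm]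

open Classical in
theorem f_matrix (a : Fin n → ℝ) (ha : ∀ i, 0 ≤ a i) (p q : Q n) :
    |ε q (f n a (e p))| = ∑ i, if p = Function.update q i (!q i) then a i else 0 := by
  induction n with
  | zero => simp [f]
  | succ n IH =>
    have haS : ∀ i : Fin n, 0 ≤ (a ∘ Fin.succ) i := fun i => ha _
    have hπq : ∀ i : Fin n, q i.succ = π q i := fun _ => rfl
    rw [Fin.sum_univ_succ]
    dsimp only [ε, e]
    rw [f_succ_apply]
    cases hp : p 0 <;> cases hq : q 0
    -- false false
    · rw [Bool.cond_false, Bool.cond_false]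
      simp only [V, LinearMap.comp_apply, LinearMap.snd_apply, map_zero, smul_zero, zero_sub,
        zero_add, map_neg, abs_neg]
      rw [IH _ haS]
      rw [if_neg (by rw [eq_update_zero_iff]; simp [hp]), zero_add]
      refine Finset.sum_congr rfl fun i _ => ?_
      rw [hπq]
      congr 1
      rw [eq_iff_iff, update_succ_iff]
      simp [hp, hq]
    -- false true
    · rw [Bool.cond_false, Bool.cond_true]
      simp only [V, LinearMap.comp_apply, LinearMap.fst_apply, map_zero, zero_add, map_smul,
        smul_eq_mul, abs_mul, abs_of_nonneg (ha 0)]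
      rw [duality]
      rw [show (if p = Function.update q 0 (!(true : Bool)) then a 0 else 0)
            = if π q = π p then a 0 else 0 by
        congr 1; rw [eq_iff_iff, eq_update_zero_iff]; simp [hp, eq_comm]]
      rw [show (∑ i : Fin n, if p = Function.update q i.succ (!q i.succ) then a i.succ else 0)
            = 0 from Finset.sum_eq_zero fun i _ => by
        rw [if_neg (fun h => by rw [update_succ_iff] at h; rw [hp, hq] at h; simp at h)]]
      split_ifs <;> simp
    -- true false
    · rw [Bool.cond_true, Bool.cond_false]
      simp only [V, LinearMap.comp_apply, LinearMap.snd_apply, map_zero, sub_zero, map_smul,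
        smul_eq_mul, abs_mul, abs_of_nonneg (ha 0)]
      rw [duality]
      rw [show (if p = Function.update q 0 (!(false : Bool)) then a 0 else 0)
            = if π q = π p then a 0 else 0 by
        congr 1; rw [eq_iff_iff, eq_update_zero_iff]; simp [hp, eq_comm]]
      rw [show (∑ i : Fin n, if p = Function.update q i.succ (!q i.succ) then a i.succ else 0)
            = 0 from Finset.sum_eq_zero fun i _ => by
        rw [if_neg (fun h => by rw [update_succ_iff] at h; rw [hp, hq] at h; simp at h)]]
      split_ifs <;> simp
    -- true true
    · rw [Bool.cond_true, Bool.cond_true]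
      simp only [V, LinearMap.comp_apply, LinearMap.fst_apply, map_zero, smul_zero, add_zero,
        sub_zero]
      rw [IH _ haS]
      rw [if_neg (by rw [eq_update_zero_iff]; simp [hp]), zero_add]
      refine Finset.sum_congr rfl fun i _ => ?_
      rw [hπq]
      congr 1
      rw [eq_iff_iff, update_succ_iff]
      simp [hp, hq]

/-! ### The parity operator -/

noncomputable def D : ∀ n, V n →ₗ[ℝ] V n
  | 0 => LinearMap.id
  | Nat.succ n =>
    LinearMap.prod ((D n).comp (LinearMap.fst _ _ _)) (-(D n).comp (LinearMap.snd _ _ _))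

theorem D_succ_apply (v : V n.succ) : D n.succ v = (D n v.1, -D n v.2) := rfl

theorem D_D (v : V n) : D n (D n v) = v := by
  induction n with
  | zero => rfl
  | succ n IH =>
    cases v
    rw [D_succ_apply, D_succ_apply]
    simp [IH, V]

theorem D_f_D (a : Fin n → ℝ) (v : V n) : D n (f n a (D n v)) = -f n a v := by
  induction n with
  | zero => simp [f, D]
  | succ n IH =>
    cases v
    rw [D_succ_apply, f_succ_apply, D_succ_apply, f_succ_apply]
    refine V.ext ?_ ?_ <;>
      simp only [V, map_add, map_sub, map_smul, map_neg, IH, D_D, Prod.fst_neg, Prod.snd_neg,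
        neg_add, neg_sub, neg_neg, smul_neg, sub_eq_add_neg]


/-! ### Eigenvalue and rank facts -/

variable {m : ℕ}

theorem f_image_P (a : Fin (m + 1) → ℝ) (w : V (m + 1))
    (hv : w ∈ LinearMap.range (f (m + 1) a + √ (∑ i, a i ^ 2) • LinearMap.id)) :
    f (m + 1) a w = √ (∑ i, a i ^ 2) • w := by
  obtain ⟨v, rfl⟩ := hv
  have hs : √ (∑ i, a i ^ 2) * √ (∑ i, a i ^ 2) = ∑ i, a i ^ 2 :=
    Real.mul_self_sqrt (Finset.sum_nonneg fun i _ => sq_nonneg _)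
  simp only [LinearMap.add_apply, LinearMap.smul_apply, LinearMap.id_apply, map_add, map_smul,
    f_squared, smul_add, smul_smul, hs]
  erw [f_squared]
  abel

theorem range_D_top : LinearMap.range (D n) = ⊤ :=
  LinearMap.range_eq_top.mpr fun v => ⟨D n v, D_D v⟩

theorem rank_range_P (a : Fin (m + 1) → ℝ) (hS : 0 < ∑ i, a i ^ 2) :
    2 ^ m ≤ Module.finrank ℝ
      (LinearMap.range (f (m + 1) a + √ (∑ i, a i ^ 2) • LinearMap.id)) := by
  have hs : 0 < √ (∑ i, a i ^ 2) := Real.sqrt_pos.mpr hS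
  set s : ℝ := √ (∑ i, a i ^ 2) with hs_def
  set P : V (m + 1) →ₗ[ℝ] V (m + 1) := f (m + 1) a + s • LinearMap.id with hP
  set N : V (m + 1) →ₗ[ℝ] V (m + 1) := f (m + 1) a - s • LinearMap.id with hN
  let Deq : V (m + 1) ≃ₗ[ℝ] V (m + 1) :=
    LinearEquiv.ofLinear (D (m + 1)) (D (m + 1))
      (LinearMap.ext fun v => D_D v) (LinearMap.ext fun v => D_D v)
  have hconj : N = -(D (m + 1) ∘ₗ P ∘ₗ D (m + 1)) := by
    refine LinearMap.ext fun v => ?_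
    simp only [hP, hN, LinearMap.neg_apply, LinearMap.comp_apply, LinearMap.add_apply,
      LinearMap.sub_apply, LinearMap.smul_apply, LinearMap.id_apply, map_add, map_smul,
      D_f_D, D_D, neg_add, neg_neg, smul_neg, sub_eq_add_neg]
    erw [D_f_D, D_D, neg_neg]
  have hrangeN : LinearMap.range N = (LinearMap.range P).map (D (m + 1)) := by
    rw [hconj, LinearMap.range_neg, LinearMap.range_comp,
      LinearMap.range_comp_of_range_eq_top _ range_D_top]
  have hrankN : Module.finrank ℝ (LinearMap.range N) = Module.finrank ℝ (LinearMap.range P) := by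
    rw [hrangeN]
    exact LinearEquiv.finrank_map_eq Deq (LinearMap.range P)
  have hsup : LinearMap.range P ⊔ LinearMap.range N = ⊤ := by
    rw [eq_top_iff]
    intro v _
    have hv : v = (2 * s)⁻¹ • (P v - N v) := by
      have : P v - N v = (2 * s) • v := by
        simp only [hP, hN, LinearMap.add_apply, LinearMap.sub_apply, LinearMap.smul_apply,
          LinearMap.id_apply]
        rw [two_mul, add_smul]
        abel
      rw [this, smul_smul, inv_mul_cancel₀ (by positivity), one_smul]
    rw [hv]
    exact Submodule.smul_mem _ _ (Submodule.sub_mem _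
      (Submodule.mem_sup_left (LinearMap.mem_range_self P v))
      (Submodule.mem_sup_right (LinearMap.mem_range_self N v)))
  have hkey := Submodule.finrank_sup_add_finrank_inf_eq (LinearMap.range P) (LinearMap.range N)
  rw [hsup, finrank_top, finrank_V, hrankN] at hkey
  have hinf : 0 ≤ Module.finrank ℝ ↥(LinearMap.range P ⊓ LinearMap.range N) := Nat.zero_le _
  have : 2 ^ (m + 1) ≤ 2 * Module.finrank ℝ (LinearMap.range P) := by omega
  rw [pow_succ, mul_comm] at this
  omega

open Classical in
theorem exists_eigenvalue (a : Fin (m + 1) → ℝ) (hS : 0 < ∑ i, a i ^ 2)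
    (H : Finset (Q (m + 1))) (hH : 2 ^ m + 1 ≤ H.card) :
    ∃ y ∈ Submodule.span ℝ (e '' (↑H : Set (Q (m + 1)))) ⊓
        LinearMap.range (f (m + 1) a + √ (∑ i, a i ^ 2) • LinearMap.id), y ≠ 0 := by
  set W := Submodule.span ℝ (e '' (↑H : Set (Q (m + 1)))) with hW
  set img := LinearMap.range (f (m + 1) a + √ (∑ i, a i ^ 2) • LinearMap.id) with himg
  have dimW : Module.finrank ℝ W = H.card := by
    have : (e '' (↑H : Set (Q (m + 1)))) = ↑(H.image e) := by
      simp [Finset.coe_image]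
    rw [hW, this]
    set F : Finset (V (m + 1)) := H.image e with hF
    have li : LinearIndependent ℝ ((↑) : F → V (m + 1)) := by
      have h1 : LinearIndependent ℝ ((↑) : Set.range (@e (m + 1)) → V (m + 1)) := by
        have := (linearIndepOn_id_range_iff (dualBases_e_ε (m + 1)).basis.injective).mpr (dualBases_e_ε (m + 1)).basis.linearIndependent
        rwa [(dualBases_e_ε (m + 1)).coe_basis] at this
      refine LinearIndepOn.mono (v := id) h1 fun x hx => ?_
      obtain ⟨p, -, rfl⟩ := Finset.mem_image.mp (Finset.mem_coe.mp hx)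
      exact Set.mem_range_self p
    rw [finrank_span_finset_eq_card li,
      Finset.card_image_of_injective _
        (by rw [← (dualBases_e_ε (m + 1)).coe_basis]; exact (dualBases_e_ε (m + 1)).basis.injective)]
  suffices hne : W ⊓ img ≠ ⊥ by
    obtain ⟨y, hy, hy0⟩ := (Submodule.ne_bot_iff _).mp hne
    exact ⟨y, hy, hy0⟩
  intro hbot
  have h2 := Submodule.finrank_sup_add_finrank_inf_eq W img
  rw [hbot, finrank_bot, add_zero] at h2
  have h1 : Module.finrank ℝ ↥(W ⊔ img) ≤ 2 ^ (m + 1) := by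
    rw [← finrank_V (n := m + 1)]
    exact Submodule.finrank_le _
  have h3 := rank_range_P a hS
  rw [← himg] at h3
  rw [dimW] at h2
  have : 2 ^ (m + 1) = 2 ^ m + 2 ^ m := by rw [pow_succ]; omega
  omega


open Classical in
theorem core (a : Fin (m + 1) → ℝ) (ha : ∀ i, 0 ≤ a i) (hS : 0 < ∑ i, a i ^ 2)
    (H : Finset (Q (m + 1))) (hH : 2 ^ m + 1 ≤ H.card) :
    ∃ q ∈ H, √ (∑ i, a i ^ 2) ≤
      ∑ i ∈ Finset.univ.filter (fun i => Function.update q i (!q i) ∈ H), a i := by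
  obtain ⟨y, ⟨y_mem_H, y_mem_g⟩, y_ne⟩ := exists_eigenvalue a hS H hH
  have coeffs_support : ((dualBases_e_ε (m + 1)).coeffs y).support ⊆ H := by
    intro p p_in
    rw [Finsupp.mem_support_iff] at p_in
    exact (dualBases_e_ε _).mem_of_mem_span y_mem_H p p_in
  obtain ⟨q, H_max⟩ : ∃ q : Q (m + 1), ∀ q' : Q (m + 1), |(ε q' : _) y| ≤ |ε q y| :=
    Finite.exists_max _
  have H_q_pos : 0 < |ε q y| := by
    contrapose! y_ne
    exact epsilon_total fun p => abs_nonpos_iff.mp (le_trans (H_max p) y_ne)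
  refine ⟨q, (dualBases_e_ε _).mem_of_mem_span y_mem_H q (abs_pos.mp H_q_pos), ?_⟩
  set s : ℝ := √ (∑ i, a i ^ 2) with hs_def
  suffices s * |ε q y| ≤
      (∑ i ∈ Finset.univ.filter (fun i => Function.update q i (!q i) ∈ H), a i) * |ε q y| from
    (mul_le_mul_iff_of_pos_right H_q_pos).mp this
  let coeffs := (dualBases_e_ε (m + 1)).coeffs
  calc
    s * |ε q y| = |ε q (s • y)| := by
      rw [map_smul, smul_eq_mul, abs_mul, abs_of_nonneg (Real.sqrt_nonneg _)]
    _ = |ε q (f (m + 1) a y)| := by rw [f_image_P a y y_mem_g]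
    _ = |ε q (f (m + 1) a (Module.DualBases.lc e (coeffs y)))| := by
      rw [(dualBases_e_ε _).lc_coeffs y]
    _ = |(coeffs y).sum fun (p : Q (m + 1)) (c : ℝ) =>
          c • (ε q ∘ f (m + 1) a ∘ fun p' : Q (m + 1) => e p') p| := by
      erw [(f (m + 1) a).map_finsupp_linearCombination, (ε q).map_finsupp_linearCombination,
        Finsupp.linearCombination_apply]
    _ ≤ ∑ p ∈ (coeffs y).support, |coeffs y p * (ε q <| f (m + 1) a <| e p)| :=
      norm_sum_le _ fun p => coeffs y p * _
    _ = ∑ p ∈ (coeffs y).support,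
          |coeffs y p| * ∑ i, if p = Function.update q i (!q i) then a i else 0 := by
      simp only [abs_mul, f_matrix a ha]
    _ ≤ ∑ p ∈ (coeffs y).support,
          |ε q y| * ∑ i, if p = Function.update q i (!q i) then a i else 0 := by
      refine Finset.sum_le_sum fun p _ => mul_le_mul_of_nonneg_right ?_ ?_
      · rw [Module.DualBases.coeffs_apply]
        exact H_max p
      · exact Finset.sum_nonneg fun i _ => by split_ifs; exacts [ha i, le_refl 0]
    _ = |ε q y| * ∑ i : Fin (m + 1),
          ∑ p ∈ (coeffs y).support, if p = Function.update q i (!q i) then a i else 0 := by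
      rw [← Finset.mul_sum, Finset.sum_comm]
    _ ≤ |ε q y| * ∑ i ∈ Finset.univ.filter (fun i => Function.update q i (!q i) ∈ H), a i := by
      refine mul_le_mul_of_nonneg_left ?_ (abs_nonneg _)
      rw [Finset.sum_filter]
      refine Finset.sum_le_sum fun i _ => ?_
      rw [Finset.sum_ite_eq' ((coeffs y).support) (Function.update q i (!q i)) fun _ => a i]
      split_ifs with h1 h2
      · exact le_refl _
      · exact absurd (coeffs_support h1) h2
      · exact ha i
      · exact le_refl _
    _ = (∑ i ∈ Finset.univ.filter (fun i => Function.update q i (!q i) ∈ H), a i) * |ε q y| :=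
      mul_comm _ _

end
end HuangW

open scoped BigOperators

/-- Weighted version of Huang's theorem: with a weight `a i ≥ 0` on edges in direction `i`,
any induced subgraph of `Qⁿ` on `2^(n-1) + 1` vertices has a vertex whose weighted degree
(the sum of `a i` over directions `i` leading to another vertex of the subgraph) is
at least `√(a₁² + ⋯ + aₙ²)`. -/
theorem huang_weighted_degree_theorem (n : ℕ) (a : Fin n → ℝ) (ha : ∀ i, 0 ≤ a i)
    (W : Finset (Fin n → Bool)) (hW : W.card = 2 ^ (n - 1) + 1) :
    ∃ v ∈ W, Real.sqrt (∑ i, a i ^ 2) ≤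
      ∑ i ∈ Finset.univ.filter
        (fun i : Fin n => Function.update v i (!v i) ∈ W), a i := by
  obtain _ | m := n
  · exfalso
    have h1 := Finset.card_le_univ W
    rw [hW] at h1
    simp at h1
  by_cases hS : ∑ i, a i ^ 2 = 0
  · have hW0 : W.Nonempty := by
      rw [← Finset.card_pos, hW]
      positivity
    obtain ⟨v, hv⟩ := hW0
    refine ⟨v, hv, ?_⟩
    rw [hS, Real.sqrt_zero]
    exact Finset.sum_nonneg fun i _ => ha i
  · have hS' : 0 < ∑ i, a i ^ 2 :=
      lt_of_le_of_ne (Finset.sum_nonneg fun i _ => sq_nonneg _) (Ne.symm hS)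
    have := HuangW.core a ha hS' (W : Finset (HuangW.Q (m + 1)))
      (by rw [show Nat.succ m - 1 = m from rfl] at hW; omega)
    obtain ⟨q, hq, hle⟩ := this
    exact ⟨q, hq, hle⟩
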